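/- Fix reals λ, r, b, ν > 0, d ≥ 0 with b > d, δ > 0, and β̂ ≥ 0, and let q(θ,ψ) := min{β̂θψ, 1} (vigilant follow-the-crowd response). Set ρ := λ/(r+b) and μ := b/ν, and assume ρ > 1 and β̂ < μρ²/(ρ−1). Let θ̂ := 1 − 1/ρ, ψ̂ := 0, and η̂ := (b−d)/ϱ(θ̂,ψ̂). If η̂ > δ, then the point P := (θ̂, ψ̂, η̂) is a Lyapunov-stable equilibrium of g. -/

import Mathlib

/-- `ϱ(θ,ψ) = b + d + λθφ + νφ + rθ` with `φ = 1 − θ − ψ` (case `d_e = 0`). -/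
noncomputable def varrho (lam r b ν d θ ψ : ℝ) : ℝ :=
  b + d + lam * θ * (1 - θ - ψ) + ν * (1 - θ - ψ) + r * θ

/-- The vector field `g = (g^θ, g^ψ, g^η)` of the limit ODE for the epidemic model with
vaccination-response function `q`, on coordinates `(θ, ψ, η)`. -/
noncomputable def epiVF (lam r b ν d : ℝ) (q : ℝ → ℝ → ℝ) (x : ℝ × ℝ × ℝ) : ℝ × ℝ × ℝ :=
  (x.1 / (x.2.2 * varrho lam r b ν d x.1 x.2.1) * ((1 - x.1 - x.2.1) * lam - r - b),
   1 / (x.2.2 * varrho lam r b ν d x.1 x.2.1) *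
     (q x.1 x.2.1 * (1 - x.1 - x.2.1) * ν - b * x.2.1),
   (b - d) / varrho lam r b ν d x.1 x.2.1 - x.2.2)

/-- The domain `D = {(θ,ψ,η) : θ ≥ 0, ψ ≥ 0, θ+ψ ≤ 1, η > δ}`. -/
def domD (δ : ℝ) : Set (ℝ × ℝ × ℝ) :=
  {x | 0 ≤ x.1 ∧ 0 ≤ x.2.1 ∧ x.1 + x.2.1 ≤ 1 ∧ δ < x.2.2}

/-- `P ∈ D` is a Lyapunov-stable equilibrium of `g`: `g(P) = 0` and there are `r₀ > 0` and a
continuously differentiable `V` with `V(P) = 0`, `V(x) > 0` and `⟨∇V(x), g(x)⟩ < 0` for all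
`x ∈ D ∩ B(P,r₀)`, `x ≠ P`. -/
def IsLyapunovStableEquilibrium (g : ℝ × ℝ × ℝ → ℝ × ℝ × ℝ) (D : Set (ℝ × ℝ × ℝ))
    (P : ℝ × ℝ × ℝ) : Prop :=
  P ∈ D ∧ g P = 0 ∧
    ∃ r₀ > (0 : ℝ), ∃ V : ℝ × ℝ × ℝ → ℝ, ContDiff ℝ 1 V ∧ V P = 0 ∧
      ∀ x ∈ D ∩ Metric.ball P r₀, x ≠ P → 0 < V x ∧ fderiv ℝ V x (g x) < 0

/-!
Near the NVDF point `P = (θ̂, 0, η̂)` take `V = A (θ - θ̂)² + B ψ + (η - η̂)²`, where `ψ` may enter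
linearly because `ψ ≥ 0` on `D`. Since `λ (1 - θ̂) = r + b`, the `θ`-component contributes
`-(rate) A (θ - θ̂)²` up to a term linear in `ψ`; the `η`-component contributes `-(η - η̂)²` up to a
coupling with `|θ - θ̂| + ψ` through the Lipschitz dependence of `ϱ`; and `β̂ < μρ²/(ρ - 1)`, i.e.
`β̂ θ̂ (1 - θ̂) ν < b`, makes the `ψ`-component at most `-κ ψ` near `P`. Choosing `A` large
enough to absorb the coupling and then `B` large enough to absorb every term linear in `ψ` gives
`⟨∇V, g⟩ ≤ -((θ - θ̂)² + ψ + (η - η̂)²)` on a neighbourhood of `P` in `D`.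
-/

open Topology

section QuadLyapunov

variable (A B : ℝ) (P : ℝ × ℝ × ℝ)

def quadLyapunov (x : ℝ × ℝ × ℝ) : ℝ :=
  A * (x.1 - P.1) ^ 2 + B * (x.2.1 - P.2.1) + (x.2.2 - P.2.2) ^ 2

theorem contDiff_quadLyapunov : ContDiff ℝ 1 (quadLyapunov A B P) := by
  unfold quadLyapunov
  fun_prop

theorem quadLyapunov_self : quadLyapunov A B P P = 0 := by
  simp [quadLyapunov]

theorem fderiv_quadLyapunov_apply (x v : ℝ × ℝ × ℝ) :
    fderiv ℝ (quadLyapunov A B P) x v =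
      2 * A * (x.1 - P.1) * v.1 + B * v.2.1 + 2 * (x.2.2 - P.2.2) * v.2.2 := by
  have hθ : HasFDerivAt (fun x : ℝ × ℝ × ℝ => x.1 - P.1) (ContinuousLinearMap.fst ℝ ℝ (ℝ × ℝ)) x :=
    hasFDerivAt_fst.sub_const _
  have hψ : HasFDerivAt (fun x : ℝ × ℝ × ℝ => x.2.1 - P.2.1)
      ((ContinuousLinearMap.fst ℝ ℝ ℝ).comp (ContinuousLinearMap.snd ℝ ℝ (ℝ × ℝ))) x :=
    (hasFDerivAt_fst.comp x hasFDerivAt_snd).sub_const _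
  have hη : HasFDerivAt (fun x : ℝ × ℝ × ℝ => x.2.2 - P.2.2)
      ((ContinuousLinearMap.snd ℝ ℝ ℝ).comp (ContinuousLinearMap.snd ℝ ℝ (ℝ × ℝ))) x :=
    (hasFDerivAt_snd.comp x hasFDerivAt_snd).sub_const _
  have hV : HasFDerivAt (quadLyapunov A B P) _ x :=
    (((hθ.pow 2).const_mul A).add (hψ.const_mul B)).add (hη.pow 2)
  rw [hV.fderiv]
  simp
  ring

variable {A B P} in
theorem quadLyapunov_pos (hA : 0 < A) (hB : 0 < B) {x : ℝ × ℝ × ℝ} (hx : P.2.1 ≤ x.2.1)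
    (hne : x ≠ P) : 0 < quadLyapunov A B P x := by
  obtain ⟨θ, ψ, η⟩ := x
  obtain ⟨θ', ψ', η'⟩ := P
  simp only [quadLyapunov] at hx ⊢
  have hθ := mul_nonneg hA.le (sq_nonneg (θ - θ'))
  have hψ := mul_nonneg hB.le (sub_nonneg.2 hx)
  have hη := sq_nonneg (η - η')
  by_contra! h
  have hθ' : A * (θ - θ') ^ 2 = 0 := by linarith
  have hψ' : B * (ψ - ψ') = 0 := by linarith
  have hη' : (η - η') ^ 2 = 0 := by linarith
  simp only [mul_eq_zero, hA.ne', hB.ne', pow_eq_zero_iff two_ne_zero, sub_eq_zero,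
    false_or] at hθ' hψ' hη'
  exact hne (by rw [hθ', hψ', hη'])

end QuadLyapunov

section Varrho

variable {lam r b ν d θ ψ : ℝ}

theorem le_varrho (hlam : 0 ≤ lam) (hr : 0 ≤ r) (hν : 0 ≤ ν) (hd : 0 ≤ d) (hθ : 0 ≤ θ)
    (hθψ : θ + ψ ≤ 1) : b ≤ varrho lam r b ν d θ ψ := by
  have hφ : 0 ≤ 1 - θ - ψ := by linarith
  unfold varrho
  nlinarith [mul_nonneg (mul_nonneg hlam hθ) hφ, mul_nonneg hν hφ, mul_nonneg hr hθ]

theorem varrho_le (hlam : 0 ≤ lam) (hr : 0 ≤ r) (hν : 0 ≤ ν) (hθ : 0 ≤ θ) (hψ : 0 ≤ ψ)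
    (hθψ : θ + ψ ≤ 1) : varrho lam r b ν d θ ψ ≤ b + d + lam + ν + r := by
  have hθφ : θ * (1 - θ - ψ) ≤ 1 := by nlinarith
  unfold varrho
  nlinarith [mul_le_mul_of_nonneg_left hθφ hlam]

theorem abs_varrho_sub_varrho_le {θ' ψ' : ℝ} (hlam : 0 ≤ lam) (hr : 0 ≤ r) (hν : 0 ≤ ν)
    (hθ : 0 ≤ θ) (hψ : 0 ≤ ψ) (hθψ : θ + ψ ≤ 1) (hθ' : 0 ≤ θ') (hθ'1 : θ' ≤ 1) :
    |varrho lam r b ν d θ ψ - varrho lam r b ν d θ' ψ'| ≤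
      2 * (lam + ν + r) * (|θ - θ'| + |ψ - ψ'|) := by
  set φ := 1 - θ - ψ
  set φ' := 1 - θ' - ψ'
  have hφ : |φ - φ'| ≤ |θ - θ'| + |ψ - ψ'| := by
    calc |φ - φ'| = |(θ' - θ) + (ψ' - ψ)| := by congr 1; ring
      _ ≤ |θ' - θ| + |ψ' - ψ| := abs_add_le _ _
      _ = |θ - θ'| + |ψ - ψ'| := by rw [abs_sub_comm θ, abs_sub_comm ψ]
  have hθφ : |θ * φ - θ' * φ'| ≤ 2 * |θ - θ'| + |ψ - ψ'| := by
    calc |θ * φ - θ' * φ'| = |(θ - θ') * φ + θ' * (φ - φ')| := by congr 1; ring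
      _ ≤ |θ - θ'| * φ + θ' * |φ - φ'| := by
        grw [abs_add_le, abs_mul, abs_mul, abs_of_nonneg (by linarith : 0 ≤ φ), abs_of_nonneg hθ']
      _ ≤ |θ - θ'| * 1 + 1 * |φ - φ'| := by
        gcongr
        · linarith
      _ ≤ 2 * |θ - θ'| + |ψ - ψ'| := by linarith
  calc |varrho lam r b ν d θ ψ - varrho lam r b ν d θ' ψ'|
      = |lam * (θ * φ - θ' * φ') + ν * (φ - φ') + r * (θ - θ')| := by
        unfold varrho; congr 1; ring
    _ ≤ lam * |θ * φ - θ' * φ'| + ν * |φ - φ'| + r * |θ - θ'| := by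
      grw [abs_add_le, abs_add_le, abs_mul, abs_mul, abs_mul, abs_of_nonneg hlam,
        abs_of_nonneg hν, abs_of_nonneg hr]
    _ ≤ lam * (2 * |θ - θ'| + |ψ - ψ'|) + ν * (|θ - θ'| + |ψ - ψ'|) + r * |θ - θ'| := by
      gcongr
    _ ≤ 2 * (lam + ν + r) * (|θ - θ'| + |ψ - ψ'|) := by
      nlinarith [abs_nonneg (θ - θ'), abs_nonneg (ψ - ψ')]

end Varrho

theorem theta_term_le {lam r b θh θ ψ E e₀ e₁ A : ℝ} (hfix : lam * (1 - θh) = r + b)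
    (hlam : 0 ≤ lam) (hA : 0 ≤ A) (hθh : θh / 2 ≤ θ) (hθ : 0 ≤ θ) (hθ1 : θ ≤ 1)
    (hu : |θ - θh| ≤ 1) (hψ : 0 ≤ ψ) (he₀ : 0 < e₀) (hE₀ : e₀ ≤ E) (hE₁ : E ≤ e₁) :
    2 * A * (θ - θh) * (θ / E * ((1 - θ - ψ) * lam - r - b)) ≤
      -(A * lam * θh / e₁) * (θ - θh) ^ 2 + 2 * A * lam / e₀ * ψ := by
  have hE : 0 < E := he₀.trans_le hE₀
  have hlow : θh / 2 / e₁ ≤ θ / E :=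
    (div_le_div_of_nonneg_right hθh (hE.trans_le hE₁).le).trans
      (div_le_div_of_nonneg_left hθ hE hE₁)
  have hup : θ / E ≤ 1 / e₀ := div_le_div₀ zero_le_one hθ1 he₀ hE₀
  have hcross : θ / E * (-(θ - θh) * ψ) ≤ 1 / e₀ * ψ :=
    calc θ / E * (-(θ - θh) * ψ) ≤ θ / E * ψ :=
          mul_le_mul_of_nonneg_left (mul_le_of_le_one_left hψ ((neg_le_abs _).trans hu))
            (div_nonneg hθ hE.le)
      _ ≤ 1 / e₀ * ψ := by gcongr
  have hAlam : 0 ≤ 2 * (A * lam) := by positivity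
  have hsq := mul_le_mul_of_nonneg_left (mul_le_mul_of_nonneg_right hlow (sq_nonneg (θ - θh))) hAlam
  have hcross' := mul_le_mul_of_nonneg_left hcross hAlam
  calc 2 * A * (θ - θh) * (θ / E * ((1 - θ - ψ) * lam - r - b))
      = -(2 * (A * lam)) * (θ / E * (θ - θh) ^ 2) + 2 * (A * lam) * (θ / E * (-(θ - θh) * ψ)) := by
        linear_combination 2 * A * (θ - θh) * (θ / E) * hfix
    _ ≤ -(2 * (A * lam)) * (θh / 2 / e₁ * (θ - θh) ^ 2) + 2 * (A * lam) * (1 / e₀ * ψ) := by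
        linarith
    _ = -(A * lam * θh / e₁) * (θ - θh) ^ 2 + 2 * A * lam / e₀ * ψ := by ring

theorem psi_term_le {b ψ y E e₁ B κ : ℝ} (hy : y ≤ (b - κ) * ψ) (hB : 0 ≤ B) (hκ : 0 ≤ κ)
    (hψ : 0 ≤ ψ) (hE : 0 < E) (hE₁ : E ≤ e₁) :
    B * (1 / E * (y - b * ψ)) ≤ -(B * κ / e₁) * ψ := by
  have hflux : y - b * ψ ≤ -(κ * ψ) := by linarith
  have hflux_nonpos : y - b * ψ ≤ 0 := hflux.trans (neg_nonpos.2 (mul_nonneg hκ hψ))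
  have hscaled : 1 / E * (y - b * ψ) ≤ 1 / e₁ * -(κ * ψ) :=
    calc 1 / E * (y - b * ψ) ≤ 1 / e₁ * (y - b * ψ) :=
          mul_le_mul_of_nonpos_right (one_div_le_one_div_of_le hE hE₁) hflux_nonpos
      _ ≤ 1 / e₁ * -(κ * ψ) := mul_le_mul_of_nonneg_left hflux (one_div_pos.2 (hE.trans_le hE₁)).le
  calc B * (1 / E * (y - b * ψ)) ≤ B * (1 / e₁ * -(κ * ψ)) := mul_le_mul_of_nonneg_left hscaled hB
    _ = -(B * κ / e₁) * ψ := by ring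

theorem eta_term_le {η ηh e K u ψ : ℝ} (hK : 0 ≤ K) (hψ : 0 ≤ ψ) (hw : |η - ηh| ≤ 1)
    (he : |e - ηh| ≤ K * (|u| + ψ)) :
    2 * (η - ηh) * (e - η) ≤ -(η - ηh) ^ 2 + K ^ 2 * u ^ 2 + 2 * K * ψ := by
  have hcross : (η - ηh) * (e - ηh) ≤ |η - ηh| * (K * (|u| + ψ)) :=
    (le_abs_self _).trans (abs_mul (η - ηh) (e - ηh) ▸
      mul_le_mul_of_nonneg_left he (abs_nonneg _))
  have hyoung := two_mul_le_add_sq |η - ηh| (K * |u|)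
  have hψterm : |η - ηh| * (K * ψ) ≤ K * ψ := mul_le_of_le_one_left (by positivity) hw
  rw [mul_pow, sq_abs, sq_abs] at hyoung
  nlinarith

theorem abs_div_sub_div_le {a c R R₀ : ℝ} (ha : 0 ≤ a) (hc : 0 < c) (hR : c ≤ R)
    (hR₀ : c ≤ R₀) : |a / R - a / R₀| ≤ a / c ^ 2 * |R - R₀| := by
  have hRpos := hc.trans_le hR
  have hR₀pos := hc.trans_le hR₀
  calc |a / R - a / R₀| = a * |R - R₀| / (R * R₀) := by
        rw [div_sub_div _ _ hRpos.ne' hR₀pos.ne', abs_div, abs_of_pos (mul_pos hRpos hR₀pos),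
          show a * R₀ - R * a = a * (R₀ - R) by ring, abs_mul, abs_of_nonneg ha, abs_sub_comm]
    _ ≤ a * |R - R₀| / c ^ 2 :=
        div_le_div_of_nonneg_left (by positivity) (by positivity) (by nlinarith)
    _ = a / c ^ 2 * |R - R₀| := by ring

section Estimate

variable {lam r b ν d : ℝ}

theorem epiVF_eq_zero {q : ℝ → ℝ → ℝ} {θh ηh : ℝ} (hq : q θh 0 = 0)
    (hfix : lam * (1 - θh) = r + b) (hηh : ηh = (b - d) / varrho lam r b ν d θh 0) :
    epiVF lam r b ν d q (θh, 0, ηh) = 0 := by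
  have hθ : (1 - θh - 0) * lam - r - b = 0 := by linear_combination hfix
  simp only [epiVF, hθ, hq, ← hηh]
  simp

theorem fderiv_quadLyapunov_epiVF_le (q : ℝ → ℝ → ℝ) {δ κ θh ηh K e₁ A B : ℝ}
    (hlam : 0 < lam) (hr : 0 ≤ r) (hb : 0 < b) (hν : 0 ≤ ν) (hd : 0 ≤ d) (hbd : d ≤ b)
    (hδ : 0 < δ) (hκ : 0 ≤ κ) (hθh : 0 ≤ θh) (hθh1 : θh ≤ 1) (hfix : lam * (1 - θh) = r + b)
    (hηh : ηh = (b - d) / varrho lam r b ν d θh 0)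
    (hK : (b - d) / b ^ 2 * (2 * (lam + ν + r)) ≤ K) (he₁ : (ηh + 1) * (b + d + lam + ν + r) ≤ e₁)
    (hA : 0 ≤ A) (hB : 0 ≤ B) {x : ℝ × ℝ × ℝ} (hx : x ∈ domD δ) (hθx : θh / 2 ≤ x.1)
    (hu : |x.1 - θh| ≤ 1) (hw : |x.2.2 - ηh| ≤ 1)
    (hq : q x.1 x.2.1 * (1 - x.1 - x.2.1) * ν ≤ (b - κ) * x.2.1) :
    fderiv ℝ (quadLyapunov A B (θh, 0, ηh)) x (epiVF lam r b ν d q x) ≤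
      -quadLyapunov (A * lam * θh / e₁ - K ^ 2) (B * κ / e₁ - (2 * A * lam / (δ * b) + 2 * K))
        (θh, 0, ηh) x := by
  obtain ⟨θ, ψ, η⟩ := x
  obtain ⟨hθ, hψ, hθψ, hη⟩ := hx
  dsimp only at hθ hψ hθψ hη hθx hu hw hq
  have hK0 : 0 ≤ K :=
    (mul_nonneg (div_nonneg (sub_nonneg.2 hbd) (by positivity)) (by positivity)).trans hK
  set R₀ := varrho lam r b ν d θh 0
  set R := varrho lam r b ν d θ ψ
  have hR₀ : b ≤ R₀ := le_varrho hlam.le hr hν hd hθh (by simpa)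
  have hR : b ≤ R := le_varrho hlam.le hr hν hd hθ hθψ
  have hηh0 : 0 ≤ ηh := hηh ▸ div_nonneg (by linarith) (hb.trans_le hR₀).le
  have hE₀ : δ * b ≤ η * R := mul_le_mul hη.le hR hb.le (by linarith)
  have hE₁ : η * R ≤ e₁ :=
    (mul_le_mul (by linarith [le_abs_self (η - ηh)]) (varrho_le hlam.le hr hν hθ hψ hθψ)
      (by linarith) (by linarith)).trans he₁
  have hRR₀ : |(b - d) / R - ηh| ≤ K * (|θ - θh| + ψ) := by
    calc |(b - d) / R - ηh| ≤ (b - d) / b ^ 2 * |R - R₀| := by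
          rw [hηh]; exact abs_div_sub_div_le (sub_nonneg.2 hbd) hb hR hR₀
      _ ≤ (b - d) / b ^ 2 * (2 * (lam + ν + r) * (|θ - θh| + |ψ - 0|)) := by
          gcongr
          exact abs_varrho_sub_varrho_le hlam.le hr hν hθ hψ hθψ hθh hθh1
      _ ≤ K * (|θ - θh| + ψ) := by
          rw [sub_zero, abs_of_nonneg hψ, ← mul_assoc]
          exact mul_le_mul_of_nonneg_right hK (by positivity)
  have hθterm := theta_term_le hfix hlam.le hA hθx hθ (by linarith) hu hψ
    (by positivity) hE₀ hE₁
  have hψterm := psi_term_le (B := B) hq hB hκ hψ (mul_pos (hδ.trans hη) (hb.trans_le hR)) hE₁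
  have hηterm := eta_term_le hK0 hψ hw hRR₀
  rw [fderiv_quadLyapunov_apply]
  simp only [epiVF, quadLyapunov]
  linarith

theorem exists_fderiv_quadLyapunov_epiVF_le (q : ℝ → ℝ → ℝ) {δ κ θh ηh : ℝ}
    (hlam : 0 < lam) (hr : 0 ≤ r) (hb : 0 < b) (hν : 0 ≤ ν) (hd : 0 ≤ d) (hbd : d ≤ b)
    (hδ : 0 < δ) (hκ : 0 < κ) (hθh : 0 < θh) (hθh1 : θh ≤ 1) (hfix : lam * (1 - θh) = r + b)
    (hηh : ηh = (b - d) / varrho lam r b ν d θh 0) :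
    ∃ A B : ℝ, 0 < A ∧ 0 < B ∧ ∀ x ∈ domD δ, θh / 2 ≤ x.1 → |x.1 - θh| ≤ 1 →
      |x.2.2 - ηh| ≤ 1 → q x.1 x.2.1 * (1 - x.1 - x.2.1) * ν ≤ (b - κ) * x.2.1 →
      fderiv ℝ (quadLyapunov A B (θh, 0, ηh)) x (epiVF lam r b ν d q x) ≤
        -quadLyapunov 1 1 (θh, 0, ηh) x := by
  have hηh0 : 0 ≤ ηh := hηh ▸ div_nonneg (by linarith)
    (hb.trans_le (le_varrho hlam.le hr hν hd hθh.le (by simpa))).le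
  obtain ⟨K, hK, hK0⟩ : ∃ K, (b - d) / b ^ 2 * (2 * (lam + ν + r)) ≤ K ∧ 0 ≤ K :=
    ⟨_, le_rfl, mul_nonneg (div_nonneg (sub_nonneg.2 hbd) (by positivity)) (by positivity)⟩
  obtain ⟨e₁, he₁, he₁0⟩ : ∃ e₁, (ηh + 1) * (b + d + lam + ν + r) ≤ e₁ ∧ 0 < e₁ :=
    ⟨_, le_rfl, by positivity⟩
  obtain ⟨A, hA, hArate⟩ : ∃ A, 0 < A ∧ A * lam * θh / e₁ = K ^ 2 + 1 :=
    ⟨(K ^ 2 + 1) * e₁ / (lam * θh), by positivity, by field_simp⟩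
  obtain ⟨B, hB, hBrate⟩ : ∃ B, 0 < B ∧ B * κ / e₁ = 2 * A * lam / (δ * b) + 2 * K + 1 :=
    ⟨(2 * A * lam / (δ * b) + 2 * K + 1) * e₁ / κ,
      div_pos (mul_pos (by positivity) he₁0) hκ, by field_simp⟩
  refine ⟨A, B, hA, hB, fun x hx hθx hu hw hq => ?_⟩
  have hV := fderiv_quadLyapunov_epiVF_le q hlam hr hb hν hd hbd hδ hκ.le hθh.le hθh1 hfix hηh
    hK he₁ hA.le hB.le hx hθx hu hw hq
  rwa [hArate, hBrate, add_sub_cancel_left, add_sub_cancel_left] at hV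

theorem min_response_inflow_le {βh θ ψ κ : ℝ} (hν : 0 ≤ ν) (hψ : 0 ≤ ψ) (hθψ : θ + ψ ≤ 1)
    (h : βh * θ * (1 - θ - ψ) * ν ≤ b - κ) :
    min (βh * θ * ψ) 1 * (1 - θ - ψ) * ν ≤ (b - κ) * ψ :=
  calc min (βh * θ * ψ) 1 * (1 - θ - ψ) * ν ≤ βh * θ * ψ * (1 - θ - ψ) * ν := by
        gcongr
        · linarith
        · exact min_le_left _ _
    _ = ψ * (βh * θ * (1 - θ - ψ) * ν) := by ring
    _ ≤ ψ * (b - κ) := mul_le_mul_of_nonneg_left h hψ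
    _ = (b - κ) * ψ := mul_comm _ _

end Estimate

section NVDF

variable {lam r b ν βh ρ θh : ℝ}

theorem nvdf_theta_fixed (hlam : lam ≠ 0) (hρ : ρ = lam / (r + b)) (hθ : θh = 1 - 1 / ρ) :
    lam * (1 - θh) = r + b := by
  rw [hθ, hρ, sub_sub_cancel, one_div_div]
  field_simp

theorem nvdf_margin (hν : 0 < ν) (hρ : 1 < ρ) (hβ : βh < b / ν * ρ ^ 2 / (ρ - 1))
    (hθ : θh = 1 - 1 / ρ) : βh * θh * (1 - θh) * ν < b := by
  have hρ0 : 0 < ρ := zero_lt_one.trans hρ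
  rw [lt_div_iff₀ (sub_pos.2 hρ)] at hβ
  have hθ' : βh * θh * (1 - θh) * ν = βh * (ρ - 1) * ν / ρ ^ 2 := by
    rw [hθ]; field_simp; ring
  rw [hθ', div_lt_iff₀ (by positivity)]
  calc βh * (ρ - 1) * ν < b / ν * ρ ^ 2 * ν := mul_lt_mul_of_pos_right hβ hν
    _ = b * ρ ^ 2 := by field_simp

theorem eventually_nhds_nvdf {βh ν b κ θh ηh : ℝ} (hθh : 0 < θh)
    (hκ : βh * θh * (1 - θh) * ν < b - κ) :
    ∀ᶠ x in 𝓝 (θh, (0 : ℝ), ηh), θh / 2 ≤ x.1 ∧ |x.1 - θh| ≤ 1 ∧ |x.2.2 - ηh| ≤ 1 ∧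
      βh * x.1 * (1 - x.1 - x.2.1) * ν ≤ b - κ := by
  have hθc : Continuous fun x : ℝ × ℝ × ℝ => |x.1 - θh| := by fun_prop
  have hηc : Continuous fun x : ℝ × ℝ × ℝ => |x.2.2 - ηh| := by fun_prop
  have hfc : Continuous fun x : ℝ × ℝ × ℝ => βh * x.1 * (1 - x.1 - x.2.1) * ν := by fun_prop
  filter_upwards [(continuous_fst.tendsto (θh, 0, ηh)).eventually_const_le (half_lt_self hθh),
    (hθc.tendsto (θh, 0, ηh)).eventually_le_const (u := 1) (by simp),
    (hηc.tendsto (θh, 0, ηh)).eventually_le_const (u := 1) (by simp),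
    (hfc.tendsto (θh, 0, ηh)).eventually_le_const (by simpa using hκ)] with x h₁ h₂ h₃ h₄
  exact ⟨h₁, h₂, h₃, h₄⟩

end NVDF

theorem stmt_11_general (lam r b ν d δ βh ρ μ θh ψh ηh : ℝ)
    (hlam : 0 < lam) (hr : 0 < r) (hb : 0 < b) (hν : 0 < ν)
    (hd : 0 ≤ d) (hbd : d < b) (hδ : 0 < δ)
    (hρdef : ρ = lam / (r + b)) (hμdef : μ = b / ν)
    (hρ : 1 < ρ) (hβlt : βh < μ * ρ ^ 2 / (ρ - 1))
    (hθ : θh = 1 - 1 / ρ) (hψ : ψh = 0)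
    (hηdef : ηh = (b - d) / varrho lam r b ν d θh ψh) (hη : δ < ηh) :
    IsLyapunovStableEquilibrium
      (epiVF lam r b ν d (fun θ ψ => min (βh * θ * ψ) 1)) (domD δ) (θh, ψh, ηh) := by
  subst hψ hμdef
  have hρ0 : 0 < ρ := zero_lt_one.trans hρ
  have hθpos : 0 < θh := by rw [hθ, sub_pos, div_lt_one hρ0]; exact hρ
  have hθle : θh ≤ 1 := by rw [hθ]; linarith [one_div_pos.2 hρ0]
  have hfix := nvdf_theta_fixed hlam.ne' hρdef hθ
  obtain ⟨κ, hκ, hκmargin⟩ : ∃ κ, 0 < κ ∧ βh * θh * (1 - θh) * ν < b - κ := by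
    have := nvdf_margin hν hρ hβlt hθ
    exact ⟨(b - βh * θh * (1 - θh) * ν) / 2, by linarith, by linarith⟩
  obtain ⟨A, B, hA, hB, hV⟩ := exists_fderiv_quadLyapunov_epiVF_le
    (fun θ ψ => min (βh * θ * ψ) 1) hlam hr.le hb hν.le hd hbd.le hδ hκ hθpos hθle hfix hηdef
  obtain ⟨r₀, hr₀, hball⟩ := Metric.eventually_nhds_iff.1
    (eventually_nhds_nvdf (ηh := ηh) hθpos hκmargin)
  refine ⟨⟨hθpos.le, le_rfl, by simpa using hθle, hη⟩, epiVF_eq_zero (by simp) hfix hηdef,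
    r₀, hr₀, quadLyapunov A B _, contDiff_quadLyapunov A B _, quadLyapunov_self A B _, ?_⟩
  rintro x ⟨hxD, hxP⟩ hne
  obtain ⟨hθx, hu, hw, hflux⟩ := hball hxP
  refine ⟨quadLyapunov_pos hA hB hxD.2.1 hne, ?_⟩
  calc _ ≤ -quadLyapunov 1 1 (θh, 0, ηh) x :=
        hV x hxD hθx hu hw (min_response_inflow_le hν.le hxD.2.1 hxD.2.2.1 hflux)
    _ < 0 := neg_neg_of_pos (quadLyapunov_pos one_pos one_pos hxD.2.1 hne)

/-- Vigilant follow-the-crowd response `q = min{β̂θψ, 1}`, endemic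
disease `ρ > 1` with `β̂ < μρ²/(ρ−1)`: the NVDF point `(1 − 1/ρ, 0, η̂)` is a
Lyapunov-stable equilibrium of `g`. -/
theorem stmt_11 (lam r b ν d δ βh ρ μ θh ψh ηh : ℝ)
    (hlam : 0 < lam) (hr : 0 < r) (hb : 0 < b) (hν : 0 < ν)
    (hd : 0 ≤ d) (hbd : d < b) (hδ : 0 < δ) (hβ : 0 ≤ βh)
    (hρdef : ρ = lam / (r + b)) (hμdef : μ = b / ν)
    (hρ : 1 < ρ) (hβlt : βh < μ * ρ ^ 2 / (ρ - 1))
    (hθ : θh = 1 - 1 / ρ) (hψ : ψh = 0)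
    (hηdef : ηh = (b - d) / varrho lam r b ν d θh ψh) (hη : δ < ηh) :
    IsLyapunovStableEquilibrium
      (epiVF lam r b ν d (fun θ ψ => min (βh * θ * ψ) 1)) (domD δ) (θh, ψh, ηh) :=
  stmt_11_general lam r b ν d δ βh ρ μ θh ψh ηh hlam hr hb hν hd hbd hδ hρdef hμdef hρ hβlt hθ hψ
    hηdef hη
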